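/- arXiv:gr-qc/0405056 — 7 statements merged into one kernel-verified Lean document; each statement's English description precedes it below -/
import Mathlib

section
/- For the unfolding F((x,y),(u₁,u₂,u₃)) = x⁴ + u₂x² + u₁x + y² on ℝ² × ℝ³, the function f_u(x,y) = x⁴ + u₂x² + u₁x + y² attains its global minimum at two or more points of ℝ² if and only if u₁ = 0 and u₂ < 0. -/
lemma crit_aux (u₁ u₂ a : ℝ)
    (h : ∀ x : ℝ, a ^ 4 + u₂ * a ^ 2 + u₁ * a ≤ x ^ 4 + u₂ * x ^ 2 + u₁ * x) :
    4 * a ^ 3 + 2 * u₂ * a + u₁ = 0 := by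
  have hd : HasDerivAt (fun x : ℝ => x ^ 4 + u₂ * x ^ 2 + u₁ * x)
      (4 * a ^ 3 + 2 * u₂ * a + u₁) a := by
    have h1 := hasDerivAt_pow 4 a
    have h2 := (hasDerivAt_pow 2 a).const_mul u₂
    have h3 := (hasDerivAt_id a).const_mul u₁
    have := (h1.add h2).add h3
    refine this.congr_deriv ?_
    norm_num
    ring
  have hmin : IsLocalMin (fun x : ℝ => x ^ 4 + u₂ * x ^ 2 + u₁ * x) a :=
    Filter.Eventually.of_forall h
  exact hmin.hasDerivAt_eq_zero hd

/-- For `f_u(x,y) = x⁴ + u₂x² + u₁x + y²` on `ℝ²`, the global minimum is attained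
at two or more points iff `u₁ = 0` and `u₂ < 0`. -/
theorem stmt_2 (u₁ u₂ u₃ : ℝ) (f : ℝ × ℝ → ℝ)
    (hf : ∀ p : ℝ × ℝ, f p = p.1 ^ 4 + u₂ * p.1 ^ 2 + u₁ * p.1 + p.2 ^ 2) :
    (∃ p q : ℝ × ℝ, p ≠ q ∧ (∀ z, f p ≤ f z) ∧ (∀ z, f q ≤ f z)) ↔
      u₁ = 0 ∧ u₂ < 0 := by
  constructor
  · rintro ⟨p, q, hpq, hp, hq⟩
    -- second coordinates are zero
    have hp2 : p.2 = 0 := by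
      have := hp (p.1, 0)
      rw [hf p, hf (p.1, 0)] at this
      simp at this
      nlinarith [sq_nonneg p.2]
    have hq2 : q.2 = 0 := by
      have := hq (q.1, 0)
      rw [hf q, hf (q.1, 0)] at this
      simp at this
      nlinarith [sq_nonneg q.2]
    set a := p.1
    set b := q.1
    have hab : a ≠ b := by
      intro h
      exact hpq (Prod.ext h (hp2.trans hq2.symm))
    have hga : ∀ x : ℝ, a ^ 4 + u₂ * a ^ 2 + u₁ * a ≤ x ^ 4 + u₂ * x ^ 2 + u₁ * x := by
      intro x
      have := hp (x, 0)
      rw [hf p, hf (x, 0)] at this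
      simp [hp2] at this
      simpa using this
    have hgb : ∀ x : ℝ, b ^ 4 + u₂ * b ^ 2 + u₁ * b ≤ x ^ 4 + u₂ * x ^ 2 + u₁ * x := by
      intro x
      have := hq (x, 0)
      rw [hf q, hf (x, 0)] at this
      simp [hq2] at this
      simpa using this
    have hca := crit_aux u₁ u₂ a hga
    have hcb := crit_aux u₁ u₂ b hgb
    have hval : a ^ 4 + u₂ * a ^ 2 + u₁ * a = b ^ 4 + u₂ * b ^ 2 + u₁ * b :=
      le_antisymm (hga b) (hgb a)
    -- derive u₂ and u₁ in terms of a, b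
    have hsub : a - b ≠ 0 := sub_ne_zero.mpr hab
    have hu2 : u₂ = -2 * (a ^ 2 + a * b + b ^ 2) := by
      have h := sub_eq_zero.mpr (hca.trans hcb.symm)
      have : (a - b) * (4 * (a ^ 2 + a * b + b ^ 2) + 2 * u₂) = 0 := by ring_nf; nlinarith [hca, hcb]
      have := (mul_eq_zero.mp this).resolve_left hsub
      linarith
    have hu1 : u₁ = (a + b) ^ 3 := by
      have : (a - b) * ((a + b) * (a ^ 2 + b ^ 2) + u₂ * (a + b) + u₁) = 0 := by
        nlinarith [hval]
      have h := (mul_eq_zero.mp this).resolve_left hsub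
      linear_combination h - (a + b) * hu2
    have hsum : a + b = 0 := by
      have key : (a - b) ^ 2 * (a + b) = 0 := by nlinarith [hca, hu2, hu1]
      have h2 : (a - b) ^ 2 ≠ 0 := pow_ne_zero 2 hsub
      exact (mul_eq_zero.mp key).resolve_left h2
    have hu1' : u₁ = 0 := by rw [hu1, hsum]; ring
    have ha0 : a ≠ 0 := by
      intro h
      apply hab
      rw [h]; linarith [hsum, h]
    refine ⟨hu1', ?_⟩
    have : u₂ = -2 * a ^ 2 := by linear_combination hu2 - 2 * b * hsum
    rw [this]
    have h2 : 0 < a ^ 2 := by positivity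
    linarith
  · rintro ⟨h1, h2⟩
    set a := Real.sqrt (-u₂ / 2) with ha
    have hpos : 0 < -u₂ / 2 := by linarith
    have ha2 : a ^ 2 = -u₂ / 2 := Real.sq_sqrt hpos.le
    have hapos : 0 < a := Real.sqrt_pos.mpr hpos
    refine ⟨(a, 0), (-a, 0), ?_, ?_, ?_⟩
    · intro h
      have := congrArg Prod.fst h
      simp at this
      linarith
    · intro z
      rw [hf, hf]
      simp [h1]
      nlinarith [sq_nonneg (z.1 ^ 2 + u₂ / 2), sq_nonneg z.2, ha2]
    · intro z
      rw [hf, hf]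
      simp [h1]
      nlinarith [sq_nonneg (z.1 ^ 2 + u₂ / 2), sq_nonneg z.2, ha2]
end

section
/- For the quartic h(x) = x⁴ + ax² + bx with b ≠ 0, every global minimum point x_m of h satisfies b·x_m < 0, and h has a unique global minimum point. -/
/-- For `h(x) = x⁴ + ax² + bx` with `b ≠ 0`, `h` has a unique global minimum point,
and every global minimum point `x_m` satisfies `b·x_m < 0`. -/
theorem stmt_4 (a b : ℝ) (hb : b ≠ 0) (h : ℝ → ℝ)
    (hh : ∀ x, h x = x ^ 4 + a * x ^ 2 + b * x) :
    (∃! x : ℝ, ∀ y, h x ≤ h y) ∧ (∀ x : ℝ, (∀ y, h x ≤ h y) → b * x < 0) := by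
  have hfun : h = fun x => x ^ 4 + a * x ^ 2 + b * x := funext hh
  -- continuity
  have hc : Continuous h := by rw [hfun]; continuity
  -- derivative
  have hd : ∀ x : ℝ, HasDerivAt h (4 * x ^ 3 + 2 * a * x + b) x := by
    intro x
    rw [hfun]
    have h1 : HasDerivAt (fun x : ℝ => x ^ 4) (4 * x ^ 3) x := by
      simpa using hasDerivAt_pow 4 x
    have h2 : HasDerivAt (fun x : ℝ => a * x ^ 2) (a * (2 * x)) x := by
      simpa using (hasDerivAt_pow 2 x).const_mul a
    have h3 : HasDerivAt (fun x : ℝ => b * x) (b * 1) x := (hasDerivAt_id x).const_mul b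
    have := (h1.add h2).add h3
    refine this.congr_deriv ?_
    ring
  -- coercivity
  have habs : Filter.Tendsto (fun x : ℝ => |x|) (Filter.cocompact ℝ) Filter.atTop := by
    exact (tendsto_norm_cocompact_atTop (E := ℝ)).congr (fun x => Real.norm_eq_abs x)
  have hcoer : Filter.Tendsto h (Filter.cocompact ℝ) Filter.atTop := by
    apply Filter.tendsto_atTop_mono' _ _ (habs.atTop_mul_atTop₀ habs)
    filter_upwards [habs.eventually_ge_atTop (|a| + |b| + 1)] with x hx
    set t := |x| with ht_def
    have h0a : (0:ℝ) ≤ |a| := abs_nonneg a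
    have h0b : (0:ℝ) ≤ |b| := abs_nonneg b
    have ht1 : (1:ℝ) ≤ t := by linarith
    have ht0 : (0:ℝ) ≤ t := by linarith
    have h4 : t ^ 2 = x ^ 2 := by rw [ht_def, sq_abs]
    have e1 : x ^ 4 = t ^ 2 * t ^ 2 := by rw [h4]; ring
    have e2 : -|a| * t ^ 2 ≤ a * x ^ 2 := by
      rw [← h4]; nlinarith [neg_abs_le a, sq_nonneg t]
    have e3 : -(|b| * t) ≤ b * x := by
      have : |b * x| = |b| * t := by rw [abs_mul, ht_def]
      linarith [neg_abs_le (b * x)]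
    have ht2 : t ≤ t ^ 2 := by nlinarith
    have ht3 : t ^ 2 ≤ t ^ 3 := by nlinarith
    have hbig : (|a| + |b| + 1) * t ^ 3 ≤ t * t ^ 3 := by
      apply mul_le_mul_of_nonneg_right hx (by positivity)
    have ha3 : |a| * t ^ 2 ≤ |a| * t ^ 3 := mul_le_mul_of_nonneg_left ht3 h0a
    have hb3 : |b| * t ≤ |b| * t ^ 3 := by nlinarith
    rw [hh]
    nlinarith [e1, e2, e3, ht2, ht3, hbig, ha3, hb3]
  obtain ⟨xm, hxm⟩ := hc.exists_forall_le hcoer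
  -- the second part: every minimum satisfies b * x < 0
  have key : ∀ x : ℝ, (∀ y, h x ≤ h y) → b * x < 0 := by
    intro x hx
    -- b * x ≤ 0 from h x ≤ h (-x)
    have hle : b * x ≤ 0 := by
      have := hx (-x)
      rw [hh, hh] at this
      nlinarith [this]
    -- h x < h 0, so x ≠ 0
    have hbpos : 0 < b ^ 2 := by positivity
    set c : ℝ := 1 / (b ^ 2 + |a| + 1) with hc_def
    have hden : (0:ℝ) < b ^ 2 + |a| + 1 := by positivity
    have hcpos : 0 < c := by positivity
    have hc1 : c ≤ 1 := by
      rw [hc_def, div_le_one hden]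
      nlinarith [abs_nonneg a]
    have hneg : h (-(c * b)) < 0 := by
      rw [hh]
      have hub : c * (b ^ 2 + |a|) < 1 := by
        rw [hc_def]
        rw [div_mul_eq_mul_div, div_lt_one hden]
        nlinarith [abs_nonneg a]
      have h1 : c ^ 3 ≤ c := by nlinarith [sq_nonneg c, mul_pos hcpos hcpos]
      have h2 : a * c ≤ |a| * c := by
        have := le_abs_self a
        nlinarith
      -- (-c b)^4 + a (-c b)^2 + b (-c b) = c b² (c³ b² + a c - 1)
      have hexp : (-(c * b)) ^ 4 + a * (-(c * b)) ^ 2 + b * (-(c * b))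
          = c * b ^ 2 * (c ^ 3 * b ^ 2 + a * c - 1) := by ring
      rw [hexp]
      have : c ^ 3 * b ^ 2 + a * c - 1 < 0 := by nlinarith
      have hcb : 0 < c * b ^ 2 := by positivity
      nlinarith
    have hx0 : x ≠ 0 := by
      intro h0
      have h00 : h 0 = 0 := by rw [hh]; ring
      have := hx (-(c * b))
      rw [h0, h00] at this
      linarith
    have : b * x ≠ 0 := mul_ne_zero hb hx0
    exact lt_of_le_of_ne hle this
  refine ⟨⟨xm, hxm, ?_⟩, key⟩
  -- uniqueness
  intro x₂ hx₂
  by_contra hne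
  have hm1 : IsLocalMin h x₂ := Filter.Eventually.of_forall hx₂
  have hm2 : IsLocalMin h xm := Filter.Eventually.of_forall hxm
  have hd1 : 4 * x₂ ^ 3 + 2 * a * x₂ + b = 0 := hm1.hasDerivAt_eq_zero (hd x₂)
  have hd2 : 4 * xm ^ 3 + 2 * a * xm + b = 0 := hm2.hasDerivAt_eq_zero (hd xm)
  have heq : h x₂ = h xm := le_antisymm (hx₂ xm) (hxm x₂)
  rw [hh, hh] at heq
  have hdne : x₂ - xm ≠ 0 := sub_ne_zero_of_ne hne
  -- factor the equal-values equation
  have hB : x₂ ^ 3 + x₂ ^ 2 * xm + x₂ * xm ^ 2 + xm ^ 3 + a * (x₂ + xm) + b = 0 := by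
    have hfac : (x₂ - xm) * (x₂ ^ 3 + x₂ ^ 2 * xm + x₂ * xm ^ 2 + xm ^ 3 + a * (x₂ + xm) + b) = 0 := by
      linear_combination heq
    rcases mul_eq_zero.mp hfac with h' | h'
    · exact absurd h' hdne
    · exact h'
  -- sum of zero derivatives minus 2·hB gives s·d² = 0
  have hs : (x₂ + xm) * (x₂ - xm) ^ 2 = 0 := by
    linear_combination (1/2 : ℝ) * hd1 + (1/2 : ℝ) * hd2 - hB
  have hsum : x₂ + xm = 0 := by
    rcases mul_eq_zero.mp hs with h' | h'
    · exact h'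
    · exact absurd (pow_eq_zero_iff (n := 2) (by norm_num) |>.mp h') hdne
  have hxm_eq : xm = -x₂ := by linarith
  rw [hxm_eq] at hB
  have : b = 0 := by linear_combination hB
  exact hb this
end

section
/- If h(x) = x⁴ + u₂x² + u₁x + u₃ has a unique global minimum point x_m with h(x_m) = 0 and u₁ ≠ 0, then x_m² = (−u₂ + √(u₂² + 12u₃))/6 and |u₁| = (√2/(3√3))·(√(u₂²+12u₃) + 2u₂)·√(√(u₂²+12u₃) − u₂). -/
/-- If `h(x) = x⁴ + u₂x² + u₁x + u₃` has a unique global minimum point `x_m` with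
`h(x_m) = 0` and `u₁ ≠ 0`, then `x_m² = (−u₂ + √(u₂² + 12u₃))/6` and
`|u₁| = (√2/(3√3))·(√(u₂²+12u₃) + 2u₂)·√(√(u₂²+12u₃) − u₂)`. -/
theorem stmt_6 (u₁ u₂ u₃ : ℝ) (hu₁ : u₁ ≠ 0) (h : ℝ → ℝ)
    (hh : ∀ x, h x = x ^ 4 + u₂ * x ^ 2 + u₁ * x + u₃)
    (xm : ℝ) (hmin : ∀ y, h xm ≤ h y)
    (huniq : ∀ x : ℝ, (∀ y, h x ≤ h y) → x = xm)
    (hval : h xm = 0)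
    (hrad : u₂ ^ 2 + 12 * u₃ ≥ 0) :
    xm ^ 2 = (-u₂ + Real.sqrt (u₂ ^ 2 + 12 * u₃)) / 6 ∧
    |u₁| = Real.sqrt 2 / (3 * Real.sqrt 3) *
        (Real.sqrt (u₂ ^ 2 + 12 * u₃) + 2 * u₂) *
        Real.sqrt (Real.sqrt (u₂ ^ 2 + 12 * u₃) - u₂) := by
  have hfun : h = fun x : ℝ => x ^ 4 + u₂ * x ^ 2 + u₁ * x + u₃ := funext hh
  -- derivative vanishes at xm
  have hd : HasDerivAt h (4 * xm ^ 3 + 2 * u₂ * xm + u₁) xm := by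
    rw [hfun]
    have h1 := hasDerivAt_pow 4 xm
    have h2 := (hasDerivAt_pow 2 xm).const_mul u₂
    have h3 := (hasDerivAt_id xm).const_mul u₁
    have := ((h1.add h2).add h3).add_const u₃
    refine this.congr_deriv ?_
    push_cast; ring
  have hloc : IsLocalMin h xm := Filter.Eventually.of_forall hmin
  have hderiv : 4 * xm ^ 3 + 2 * u₂ * xm + u₁ = 0 := hloc.hasDerivAt_eq_zero hd
  have hpos : ∀ y, 0 ≤ h y := fun y => hval ▸ hmin y
  have hu3 : xm ^ 4 + u₂ * xm ^ 2 + u₁ * xm + u₃ = 0 := by rw [← hh]; exact hval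
  have hu1 : u₁ = -4 * xm ^ 3 - 2 * u₂ * xm := by linarith [hderiv]
  have hu3' : u₃ = 3 * xm ^ 4 + u₂ * xm ^ 2 := by linear_combination hu3 - xm * hderiv
  have hxm : xm ≠ 0 := by
    intro h0
    apply hu₁
    rw [h0] at hu1; linarith [hu1]
  have hxm2 : 0 < xm ^ 2 := by positivity
  -- h(-xm) ≥ 0 gives u₂ + 2xm² ≥ 0
  have hneg : 0 ≤ (-xm) ^ 4 + u₂ * (-xm) ^ 2 + u₁ * (-xm) + u₃ := by
    rw [← hh]; exact hpos _
  rw [hu1, hu3'] at hneg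
  have hc : 0 ≤ u₂ + 2 * xm ^ 2 := by nlinarith [hneg, hxm2]
  -- the radical
  have hsq : Real.sqrt (u₂ ^ 2 + 12 * u₃) = u₂ + 6 * xm ^ 2 := by
    have key : u₂ ^ 2 + 12 * u₃ = (u₂ + 6 * xm ^ 2) ^ 2 := by rw [hu3']; ring
    rw [key]
    exact Real.sqrt_sq (by linarith)
  constructor
  · rw [hsq]; ring
  · rw [hsq]
    have hu1' : u₁ = -2 * xm * (u₂ + 2 * xm ^ 2) := by linarith [hderiv]
    have habs : |u₁| = 2 * |xm| * (u₂ + 2 * xm ^ 2) := by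
      rw [hu1']
      rw [abs_mul, abs_of_nonneg hc, abs_mul]
      norm_num
    have h6 : Real.sqrt (u₂ + 6 * xm ^ 2 - u₂) = Real.sqrt 6 * |xm| := by
      rw [show u₂ + 6 * xm ^ 2 - u₂ = 6 * xm ^ 2 by ring,
        Real.sqrt_mul (by norm_num), Real.sqrt_sq_eq_abs]
    rw [h6, habs]
    have h26 : Real.sqrt 2 * Real.sqrt 6 = 2 * Real.sqrt 3 := by
      rw [← Real.sqrt_mul (by norm_num)]
      rw [show (2:ℝ) * 6 = 2 ^ 2 * 3 by norm_num, Real.sqrt_mul (by positivity),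
        Real.sqrt_sq (by norm_num)]
    have h3pos : (0:ℝ) < Real.sqrt 3 := Real.sqrt_pos.mpr (by norm_num)
    field_simp
    linear_combination (-3 * (u₂ + 2 * xm ^ 2)) * h26
end

section
/- The function μ(u) = min{u₁, u₂, u₃, 0} on ℝ³ is non-differentiable exactly on the union of six sets: {u₁ = u₂ ≤ min(u₃,0)}, {u₂ = u₃ ≤ min(u₁,0)}, {u₃ = u₁ ≤ min(u₂,0)}, {u₁ = 0 ≤ min(u₂,u₃)}, {u₂ = 0 ≤ min(u₁,u₃)}, {u₃ = 0 ≤ min(u₁,u₂)}. -/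
open Filter Topology

private lemma key_fderiv (μ : (Fin 3 → ℝ) → ℝ) (f : (Fin 3 → ℝ) →L[ℝ] ℝ) (u : Fin 3 → ℝ)
    (hle : ∀ x, μ x ≤ f x) (heq : μ u = f u) (hd : DifferentiableAt ℝ μ u) :
    fderiv ℝ μ u = f := by
  have hmin : IsLocalMin (fun x => f x - μ x) u := by
    apply Filter.Eventually.of_forall
    intro x
    show f u - μ u ≤ f x - μ x
    have := hle x
    linarith [heq.le, heq.ge]
  have h0 := hmin.fderiv_eq_zero
  have heq2 : fderiv ℝ (fun x => f x - μ x) u = f - fderiv ℝ μ u := by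
    rw [fderiv_fun_sub f.differentiableAt hd, f.fderiv]
  rw [heq2] at h0
  exact (sub_eq_zero.mp h0).symm

private lemma key_nondiff (μ : (Fin 3 → ℝ) → ℝ) (f g : (Fin 3 → ℝ) →L[ℝ] ℝ) (u : Fin 3 → ℝ)
    (hlef : ∀ x, μ x ≤ f x) (hleg : ∀ x, μ x ≤ g x)
    (hfu : μ u = f u) (hgu : μ u = g u) (hfg : f ≠ g) :
    ¬ DifferentiableAt ℝ μ u := fun hd =>
  hfg ((key_fderiv μ f u hlef hfu hd).symm.trans (key_fderiv μ g u hleg hgu hd))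

/-- `μ(u) = min{u₁, u₂, u₃, 0}` on `ℝ³` is non-differentiable exactly on the union
of six sets. -/
theorem stmt_7 (μ : (Fin 3 → ℝ) → ℝ)
    (hμ : ∀ u, μ u = min (u 0) (min (u 1) (min (u 2) 0))) :
    {u : Fin 3 → ℝ | ¬ DifferentiableAt ℝ μ u} =
      {u : Fin 3 → ℝ | u 0 = u 1 ∧ u 0 ≤ min (u 2) 0} ∪
      {u : Fin 3 → ℝ | u 1 = u 2 ∧ u 1 ≤ min (u 0) 0} ∪
      {u : Fin 3 → ℝ | u 2 = u 0 ∧ u 2 ≤ min (u 1) 0} ∪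
      {u : Fin 3 → ℝ | u 0 = 0 ∧ 0 ≤ min (u 1) (u 2)} ∪
      {u : Fin 3 → ℝ | u 1 = 0 ∧ 0 ≤ min (u 0) (u 2)} ∪
      {u : Fin 3 → ℝ | u 2 = 0 ∧ 0 ≤ min (u 0) (u 1)} := by
  set P0 : (Fin 3 → ℝ) →L[ℝ] ℝ := ContinuousLinearMap.proj 0 with hP0
  set P1 : (Fin 3 → ℝ) →L[ℝ] ℝ := ContinuousLinearMap.proj 1 with hP1
  set P2 : (Fin 3 → ℝ) →L[ℝ] ℝ := ContinuousLinearMap.proj 2 with hP2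
  have hle0 : ∀ x, μ x ≤ P0 x := by
    intro x; rw [hμ]; simp [hP0, min_le_iff]
  have hle1 : ∀ x, μ x ≤ P1 x := by
    intro x; rw [hμ]; simp [hP1, min_le_iff]
  have hle2 : ∀ x, μ x ≤ P2 x := by
    intro x; rw [hμ]; simp [hP2, min_le_iff]
  have hleZ : ∀ x, μ x ≤ (0 : (Fin 3 → ℝ) →L[ℝ] ℝ) x := by
    intro x; rw [hμ]; simp [min_le_iff]
  have ne01 : P0 ≠ P1 := by
    intro h; have := DFunLike.congr_fun h (Pi.single 0 1)
    simp [hP0, hP1, Pi.single_apply] at this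
  have ne12 : P1 ≠ P2 := by
    intro h; have := DFunLike.congr_fun h (Pi.single 1 1)
    simp [hP1, hP2, Pi.single_apply] at this
  have ne20 : P2 ≠ P0 := by
    intro h; have := DFunLike.congr_fun h (Pi.single 2 1)
    simp [hP2, hP0, Pi.single_apply] at this
  have ne0Z : P0 ≠ 0 := by
    intro h; have := DFunLike.congr_fun h (Pi.single 0 1)
    simp [hP0, Pi.single_apply] at this
  have ne1Z : P1 ≠ 0 := by
    intro h; have := DFunLike.congr_fun h (Pi.single 1 1)
    simp [hP1, Pi.single_apply] at this
  have ne2Z : P2 ≠ 0 := by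
    intro h; have := DFunLike.congr_fun h (Pi.single 2 1)
    simp [hP2, Pi.single_apply] at this
  ext u
  simp only [Set.mem_union, Set.mem_setOf_eq]
  constructor
  · intro hnd
    by_contra hmem
    push_neg at hmem
    obtain ⟨⟨⟨⟨⟨h1, h2⟩, h3⟩, h4⟩, h5⟩, h6⟩ := hmem
    apply hnd
    simp only [min_lt_iff, lt_min_iff, not_le] at h1 h2 h3 h4 h5 h6
    have four : (u 0 ≤ u 1 ∧ u 0 ≤ u 2 ∧ u 0 ≤ 0) ∨ (u 1 ≤ u 0 ∧ u 1 ≤ u 2 ∧ u 1 ≤ 0) ∨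
        (u 2 ≤ u 0 ∧ u 2 ≤ u 1 ∧ u 2 ≤ 0) ∨ (0 ≤ u 0 ∧ 0 ≤ u 1 ∧ 0 ≤ u 2) := by
      rcases le_total (u 0) (u 1) with a|a <;> rcases le_total (u 2) (0:ℝ) with b|b <;>
        rcases le_total (u 0) (u 2) with c|c <;> rcases le_total (u 1) (0:ℝ) with d|d <;>
        rcases le_total (u 0) (0:ℝ) with g|g <;> rcases le_total (u 1) (u 2) with k|k <;>
      first
        | exact Or.inl ⟨by linarith, by linarith, by linarith⟩
        | exact Or.inr (Or.inl ⟨by linarith, by linarith, by linarith⟩)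
        | exact Or.inr (Or.inr (Or.inl ⟨by linarith, by linarith, by linarith⟩))
        | exact Or.inr (Or.inr (Or.inr ⟨by linarith, by linarith, by linarith⟩))
    have main : (u 0 < u 1 ∧ u 0 < u 2 ∧ u 0 < 0) ∨ (u 1 < u 0 ∧ u 1 < u 2 ∧ u 1 < 0) ∨
        (u 2 < u 0 ∧ u 2 < u 1 ∧ u 2 < 0) ∨ (0 < u 0 ∧ 0 < u 1 ∧ 0 < u 2) := by
      rcases four with ⟨a, b, c⟩ | ⟨a, b, c⟩ | ⟨a, b, c⟩ | ⟨a, b, c⟩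
      · refine Or.inl ⟨lt_of_le_of_ne a ?_, lt_of_le_of_ne b ?_, lt_of_le_of_ne c ?_⟩
        · intro e; rcases h1 e with h|h <;> linarith
        · intro e; rcases h3 e.symm with h|h <;> linarith
        · intro e; rcases h4 e with h|h <;> linarith
      · refine Or.inr (Or.inl ⟨lt_of_le_of_ne a ?_, lt_of_le_of_ne b ?_, lt_of_le_of_ne c ?_⟩)
        · intro e; rcases h1 e.symm with h|h <;> linarith
        · intro e; rcases h2 e with h|h <;> linarith
        · intro e; rcases h5 e with h|h <;> linarith
      · refine Or.inr (Or.inr (Or.inl ⟨lt_of_le_of_ne a ?_, lt_of_le_of_ne b ?_,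
          lt_of_le_of_ne c ?_⟩))
        · intro e; rcases h3 e with h|h <;> linarith
        · intro e; rcases h2 e.symm with h|h <;> linarith
        · intro e; rcases h6 e with h|h <;> linarith
      · refine Or.inr (Or.inr (Or.inr ⟨lt_of_le_of_ne a ?_, lt_of_le_of_ne b ?_,
          lt_of_le_of_ne c ?_⟩))
        · intro e; rcases h4 e.symm with h|h <;> linarith
        · intro e; rcases h5 e.symm with h|h <;> linarith
        · intro e; rcases h6 e.symm with h|h <;> linarith
    rcases main with ⟨a, b, c⟩ | ⟨a, b, c⟩ | ⟨a, b, c⟩ | ⟨a, b, c⟩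
    · refine P0.differentiableAt.congr_of_eventuallyEq ?_
      have e1 : ∀ᶠ x in 𝓝 u, x 0 < x 1 :=
        (isOpen_lt (continuous_apply 0) (continuous_apply 1)).eventually_mem a
      have e2 : ∀ᶠ x in 𝓝 u, x 0 < x 2 :=
        (isOpen_lt (continuous_apply 0) (continuous_apply 2)).eventually_mem b
      have e3 : ∀ᶠ x in 𝓝 u, x 0 < 0 :=
        (isOpen_lt (continuous_apply 0) continuous_const).eventually_mem c
      filter_upwards [e1, e2, e3] with x hx1 hx2 hx3
      rw [hμ]
      simp only [hP0, ContinuousLinearMap.proj_apply]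
      exact min_eq_left (le_min hx1.le (le_min hx2.le hx3.le))
    · refine P1.differentiableAt.congr_of_eventuallyEq ?_
      have e1 : ∀ᶠ x in 𝓝 u, x 1 < x 0 :=
        (isOpen_lt (continuous_apply 1) (continuous_apply 0)).eventually_mem a
      have e2 : ∀ᶠ x in 𝓝 u, x 1 < x 2 :=
        (isOpen_lt (continuous_apply 1) (continuous_apply 2)).eventually_mem b
      have e3 : ∀ᶠ x in 𝓝 u, x 1 < 0 :=
        (isOpen_lt (continuous_apply 1) continuous_const).eventually_mem c
      filter_upwards [e1, e2, e3] with x hx1 hx2 hx3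
      rw [hμ]
      simp only [hP1, ContinuousLinearMap.proj_apply, min_def]
      split_ifs <;> linarith
    · refine P2.differentiableAt.congr_of_eventuallyEq ?_
      have e1 : ∀ᶠ x in 𝓝 u, x 2 < x 0 :=
        (isOpen_lt (continuous_apply 2) (continuous_apply 0)).eventually_mem a
      have e2 : ∀ᶠ x in 𝓝 u, x 2 < x 1 :=
        (isOpen_lt (continuous_apply 2) (continuous_apply 1)).eventually_mem b
      have e3 : ∀ᶠ x in 𝓝 u, x 2 < 0 :=
        (isOpen_lt (continuous_apply 2) continuous_const).eventually_mem c
      filter_upwards [e1, e2, e3] with x hx1 hx2 hx3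
      rw [hμ]
      simp only [hP2, ContinuousLinearMap.proj_apply, min_def]
      split_ifs <;> linarith
    · refine (differentiableAt_const (0:ℝ)).congr_of_eventuallyEq ?_
      have e1 : ∀ᶠ x in 𝓝 u, (0:ℝ) < x 0 :=
        (isOpen_lt continuous_const (continuous_apply 0)).eventually_mem a
      have e2 : ∀ᶠ x in 𝓝 u, (0:ℝ) < x 1 :=
        (isOpen_lt continuous_const (continuous_apply 1)).eventually_mem b
      have e3 : ∀ᶠ x in 𝓝 u, (0:ℝ) < x 2 :=
        (isOpen_lt continuous_const (continuous_apply 2)).eventually_mem c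
      filter_upwards [e1, e2, e3] with x hx1 hx2 hx3
      rw [hμ, min_eq_right hx3.le, min_eq_right hx2.le, min_eq_right hx1.le]
  · rintro (((((⟨hA, hB⟩ | ⟨hA, hB⟩) | ⟨hA, hB⟩) | ⟨hA, hB⟩) | ⟨hA, hB⟩) | ⟨hA, hB⟩)
    · rw [le_min_iff] at hB
      have hm : μ u = u 0 := by
        rw [hμ]; exact min_eq_left (le_min hA.le (le_min hB.1 hB.2))
      exact key_nondiff μ P0 P1 u hle0 hle1 hm (hm.trans hA) ne01
    · rw [le_min_iff] at hB
      have hm : μ u = u 1 := by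
        rw [hμ]; simp only [min_def]; split_ifs <;> linarith
      exact key_nondiff μ P1 P2 u hle1 hle2 hm (hm.trans hA) ne12
    · rw [le_min_iff] at hB
      have hm : μ u = u 2 := by
        rw [hμ]; simp only [min_def]; split_ifs <;> linarith
      exact key_nondiff μ P2 P0 u hle2 hle0 hm (hm.trans hA) ne20
    · rw [le_min_iff] at hB
      have hm : μ u = 0 := by
        rw [hμ]; simp only [min_def]; split_ifs <;> linarith
      exact key_nondiff μ P0 0 u hle0 hleZ (hm.trans hA.symm) hm ne0Z
    · rw [le_min_iff] at hB
      have hm : μ u = 0 := by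
        rw [hμ]; simp only [min_def]; split_ifs <;> linarith
      exact key_nondiff μ P1 0 u hle1 hleZ (hm.trans hA.symm) hm ne1Z
    · rw [le_min_iff] at hB
      have hm : μ u = 0 := by
        rw [hμ]; simp only [min_def]; split_ifs <;> linarith
      exact key_nondiff μ P2 0 u hle2 hleZ (hm.trans hA.symm) hm ne2Z
end

section
/- The Maxwell set of the unfolding (A₃,A₁): the set of (u₁,u₂,u₃) ∈ ℝ³ for which min{min_x(x⁴+u₂x²+u₁x+u₃), 0} is attained at two or more points of the disjoint union (two or more global minimizers counting the two components), equals M₁ ∪ M₂ where M₁ = {u₁ = 0, u₂ < 0, u₃ ≤ u₂²/4} and M₂ is determined by the quartic x⁴+u₂x²+u₁x+u₃ having minimum value exactly 0 (with the explicit formula |u₁| = (√2/(3√3))(√(u₂²+12u₃)+2u₂)√(√(u₂²+12u₃)−u₂) when the minimizer is unique). -/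
open Filter

private lemma quartic_lower (a b c x : ℝ) :
    x ^ 2 - ((a - 1) ^ 2 / 2 + b ^ 2 / 2 + 1 / 4 - c) ≤ x ^ 4 + a * x ^ 2 + b * x + c := by
  nlinarith [sq_nonneg (x ^ 2 + (a - 1)), sq_nonneg (x + b), sq_nonneg (x ^ 2 - 1 / 2),
    sq_nonneg x]

private lemma exists_min (a b c : ℝ) :
    ∃ p : ℝ, ∀ y : ℝ, p ^ 4 + a * p ^ 2 + b * p + c ≤ y ^ 4 + a * y ^ 2 + b * y + c := by
  have hc : Continuous (fun x : ℝ => x ^ 4 + a * x ^ 2 + b * x + c) := by continuity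
  have h2 : Tendsto (fun x : ℝ => x ^ 2 - ((a - 1) ^ 2 / 2 + b ^ 2 / 2 + 1 / 4 - c))
      (cocompact ℝ) atTop := by
    have hsq : Tendsto (fun x : ℝ => x ^ 2) (cocompact ℝ) atTop := by
      rw [cocompact_eq_atBot_atTop, tendsto_sup]
      constructor
      · have h := (tendsto_pow_atTop (n := 2) two_ne_zero).comp
          (tendsto_neg_atBot_atTop : Tendsto (fun x : ℝ => -x) atBot atTop)
        refine h.congr fun x => by simp [Function.comp]
      · exact tendsto_pow_atTop two_ne_zero
    exact (tendsto_atTop_add_const_right (cocompact ℝ)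
        (-((a - 1) ^ 2 / 2 + b ^ 2 / 2 + 1 / 4 - c)) hsq).congr fun x => by ring
  have ht : Tendsto (fun x : ℝ => x ^ 4 + a * x ^ 2 + b * x + c) (cocompact ℝ) atTop :=
    tendsto_atTop_mono (fun x => quartic_lower a b c x) h2
  exact hc.exists_forall_le ht

private lemma m_eq (f : ℝ → ℝ) (p : ℝ) (hp : ∀ y, f p ≤ f y) : (⨅ x, f x) = f p :=
  le_antisymm (ciInf_le ⟨f p, by rintro y ⟨x, rfl⟩; exact hp x⟩ p) (le_ciInf hp)

private lemma two_min (a b c p q : ℝ) (hpq : p ≠ q)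
    (hp : ∀ y : ℝ, p ^ 4 + a * p ^ 2 + b * p + c ≤ y ^ 4 + a * y ^ 2 + b * y + c)
    (hq : ∀ y : ℝ, q ^ 4 + a * q ^ 2 + b * q + c ≤ y ^ 4 + a * y ^ 2 + b * y + c) :
    b = 0 ∧ a < 0 ∧ p ^ 4 + a * p ^ 2 + b * p + c = c - a ^ 2 / 4 := by
  have hsub : p - q ≠ 0 := sub_ne_zero.mpr hpq
  have hfp : IsLocalMin (fun x : ℝ => x ^ 4 + a * x ^ 2 + b * x + c) p :=
    Filter.Eventually.of_forall hp
  have hfq : IsLocalMin (fun x : ℝ => x ^ 4 + a * x ^ 2 + b * x + c) q :=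
    Filter.Eventually.of_forall hq
  have hd : ∀ x : ℝ, HasDerivAt (fun x : ℝ => x ^ 4 + a * x ^ 2 + b * x + c)
      (4 * x ^ 3 + 2 * a * x + b) x := by
    intro x
    have := (((hasDerivAt_pow 4 x).add ((hasDerivAt_pow 2 x).const_mul a)).add
      ((hasDerivAt_id x).const_mul b)).add_const c
    refine this.congr_deriv ?_
    simp; ring
  have dp : 4 * p ^ 3 + 2 * a * p + b = 0 := hfp.hasDerivAt_eq_zero (hd p)
  have dq : 4 * q ^ 3 + 2 * a * q + b = 0 := hfq.hasDerivAt_eq_zero (hd q)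
  have heq : p ^ 4 + a * p ^ 2 + b * p + c = q ^ 4 + a * q ^ 2 + b * q + c :=
    le_antisymm (hp q) (hq p)
  have e1 : 4 * (p ^ 2 + p * q + q ^ 2) + 2 * a = 0 := by
    apply mul_left_cancel₀ hsub
    linear_combination dp - dq
  have e2 : (p + q) * (p ^ 2 + q ^ 2) + a * (p + q) + b = 0 := by
    apply mul_left_cancel₀ hsub
    linear_combination heq
  have ha : a = -2 * (p ^ 2 + p * q + q ^ 2) := by linarith
  have hb : b = -((p + q) * (p ^ 2 + q ^ 2)) - a * (p + q) := by linarith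
  have e3 : (p + q) * (p - q) ^ 2 = 0 := by
    rw [ha] at dp hb
    rw [hb] at dp
    linear_combination dp
  have hs : p + q = 0 := by
    rcases mul_eq_zero.mp e3 with h | h
    · exact h
    · exact absurd (pow_eq_zero_iff two_ne_zero |>.mp h) hsub
  have hqp : q = -p := by linarith
  have hp0 : p ≠ 0 := by
    intro h0; apply hpq; rw [h0, hqp, h0, neg_zero]
  have hb0 : b = 0 := by rw [hb, ha, hqp]; ring
  have ha2 : a = -2 * p ^ 2 := by rw [ha, hqp]; ring
  refine ⟨hb0, ?_, ?_⟩
  · rw [ha2]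
    have := sq_nonneg p
    have : p ^ 2 > 0 := by positivity
    linarith
  · rw [hb0, ha2]; ring

/-- The Maxwell set of the unfolding `(A₃,A₁)`:
`B = {u : h_u has two global minimizers and m(u) ≤ 0} ∪
     {u : h_u has a unique global minimizer and m(u) = 0}`
equals `M₁ ∪ M₂`, where `h_u(x) = x⁴ + u₂x² + u₁x + u₃`, `m(u) = inf_x h_u(x)`,
`M₁ = {u₁ = 0 ∧ u₂ < 0 ∧ u₃ ≤ u₂²/4}` and `M₂ = {m(u) = 0}`. -/
theorem stmt_9 (h : (Fin 3 → ℝ) → ℝ → ℝ)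
    (hh : ∀ u x, h u x = x ^ 4 + u 1 * x ^ 2 + u 0 * x + u 2)
    (m : (Fin 3 → ℝ) → ℝ) (hm : ∀ u, m u = ⨅ x : ℝ, h u x) :
    {u : Fin 3 → ℝ |
        (∃ p q : ℝ, p ≠ q ∧ (∀ y, h u p ≤ h u y) ∧ (∀ y, h u q ≤ h u y) ∧
          m u ≤ 0) ∨
        (∃ p : ℝ, (∀ y, h u p ≤ h u y) ∧ (∀ x, (∀ y, h u x ≤ h u y) → x = p) ∧
          m u = 0)} =
      {u : Fin 3 → ℝ | u 0 = 0 ∧ u 1 < 0 ∧ u 2 ≤ u 1 ^ 2 / 4} ∪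
      {u : Fin 3 → ℝ | m u = 0} := by
  ext u
  simp only [Set.mem_setOf_eq, Set.mem_union]
  constructor
  · rintro (⟨p, q, hpq, hp, hq, hm0⟩ | ⟨p, hp, _, hm0⟩)
    · left
      have hmp : m u = h u p := by rw [hm]; exact m_eq (h u) p hp
      have hp' : ∀ y : ℝ, p ^ 4 + u 1 * p ^ 2 + u 0 * p + u 2 ≤
          y ^ 4 + u 1 * y ^ 2 + u 0 * y + u 2 := by
        intro y; have := hp y; rwa [hh, hh] at this
      have hq' : ∀ y : ℝ, q ^ 4 + u 1 * q ^ 2 + u 0 * q + u 2 ≤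
          y ^ 4 + u 1 * y ^ 2 + u 0 * y + u 2 := by
        intro y; have := hq y; rwa [hh, hh] at this
      obtain ⟨hb0, ha, hval⟩ := two_min (u 1) (u 0) (u 2) p q hpq hp' hq'
      refine ⟨hb0, ha, ?_⟩
      have : m u = u 2 - u 1 ^ 2 / 4 := by rw [hmp, hh]; exact hval
      linarith [hm0, this.symm.trans_le hm0]
    · right; exact hm0
  · rintro (⟨hb, ha, hc⟩ | hm0)
    · left
      set p := Real.sqrt (-(u 1) / 2) with hpdef
      have hp2 : p ^ 2 = -(u 1) / 2 := Real.sq_sqrt (by linarith)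
      have hppos : 0 < p := Real.sqrt_pos.mpr (by linarith)
      have hp4 : p ^ 4 = u 1 ^ 2 / 4 := by nlinarith [hp2]
      have hminp : ∀ y : ℝ, h u p ≤ h u y := by
        intro y; rw [hh, hh, hb]
        nlinarith [sq_nonneg (y ^ 2 + u 1 / 2), hp2, hp4]
      have hminq : ∀ y : ℝ, h u (-p) ≤ h u y := by
        intro y; rw [hh, hh, hb]
        have : (-p) ^ 2 = p ^ 2 := by ring
        nlinarith [sq_nonneg (y ^ 2 + u 1 / 2), hp2, hp4]
      have hmp : m u = h u p := by rw [hm]; exact m_eq (h u) p hminp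
      have hval : h u p = u 2 - u 1 ^ 2 / 4 := by
        rw [hh, hb]; linear_combination u 1 * hp2 + hp4
      refine ⟨p, -p, ?_, hminp, hminq, ?_⟩
      · intro hcon; have : p = 0 := by linarith [hcon ▸ hppos]
        linarith
      · rw [hmp, hval]; linarith
    · obtain ⟨p, hp'⟩ := exists_min (u 1) (u 0) (u 2)
      have hp : ∀ y : ℝ, h u p ≤ h u y := by
        intro y; rw [hh, hh]; exact hp' y
      by_cases hex : ∃ q, q ≠ p ∧ ∀ y, h u q ≤ h u y
      · obtain ⟨q, hqp, hq⟩ := hex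
        exact Or.inl ⟨p, q, Ne.symm hqp, hp, hq, le_of_eq hm0⟩
      · push_neg at hex
        refine Or.inr ⟨p, hp, ?_, hm0⟩
        intro x hx
        by_contra hxp
        obtain ⟨y, hy⟩ := hex x hxp
        exact absurd (hx y) (not_le.mpr hy)
end

section
/- If a quartic polynomial h(x) = x⁴ + ax² + bx + c has two distinct global minimum points α and β, then h(x) = (x−α)²(x−β)² + c', i.e., α + β = 0, a = −2α², b = 0, and the minimum value is c' = c − α⁴. -/
/-! Both minimum points are critical points with the same value. For the cubic
derivative `h' x = 4x³ + 2ax + b`, the identity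
`2(α + β)(α - β)³ = (α - β)(h' α + h' β) - 2(h α - h β)`
forces `α + β = 0` once `α ≠ β`; the critical-point equations then give `b = 0` and
`a = -2α²`. -/

theorem hasDerivAt_quartic (a b c x : ℝ) :
    HasDerivAt (fun x => x ^ 4 + a * x ^ 2 + b * x + c) (4 * x ^ 3 + 2 * a * x + b) x := by
  refine ((((hasDerivAt_pow 4 x).add ((hasDerivAt_pow 2 x).const_mul a)).add
    ((hasDerivAt_id' x).const_mul b)).add_const c).congr_deriv ?_
  norm_num
  ring

theorem quartic_coeffs_of_critical_points_of_eq_value {K : Type*} [CommRing K] [IsDomain K] [CharZero K]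
    {a b α β : K} (hαβ : α ≠ β)
    (hα : 4 * α ^ 3 + 2 * a * α + b = 0) (hβ : 4 * β ^ 3 + 2 * a * β + b = 0)
    (hval : α ^ 4 + a * α ^ 2 + b * α = β ^ 4 + a * β ^ 2 + b * β) :
    b = 0 ∧ β = -α ∧ a = -2 * α ^ 2 := by
  have hsub : α - β ≠ 0 := sub_ne_zero.mpr hαβ
  have hsum : α + β = 0 := by
    have key : 2 * (α + β) * (α - β) ^ 3 = 0 := by
      linear_combination (α - β) * (hα + hβ) - 2 * hval
    simpa [hsub] using key
  have hβα : β = -α := eq_neg_of_add_eq_zero_right hsum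
  subst hβα
  have hb : b = 0 := by
    have : 2 * b = 0 := by linear_combination hα + hβ
    simpa using this
  have hα0 : α ≠ 0 := by
    rintro rfl
    exact hαβ neg_zero.symm
  refine ⟨hb, rfl, mul_left_cancel₀ (mul_ne_zero two_ne_zero hα0) ?_⟩
  linear_combination hα - hb

/-- If the quartic `h(x) = x⁴ + ax² + bx + c` attains its global minimum at two
distinct points `α ≠ β`, then `b = 0`, `β = −α`, `a = −2α²`, and
`h(x) = (x² − α²)² + (c − α⁴)`. -/
theorem stmt_14 (a b c : ℝ) (h : ℝ → ℝ)
    (hh : ∀ x, h x = x ^ 4 + a * x ^ 2 + b * x + c)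
    (α β : ℝ) (hαβ : α ≠ β)
    (hα : ∀ y, h α ≤ h y) (hβ : ∀ y, h β ≤ h y) :
    b = 0 ∧ β = -α ∧ a = -2 * α ^ 2 ∧
    ∀ x, h x = (x ^ 2 - α ^ 2) ^ 2 + (c - α ^ 4) := by
  have hcrit {x : ℝ} (hx : ∀ y, h x ≤ h y) : 4 * x ^ 3 + 2 * a * x + b = 0 :=
    IsLocalMin.hasDerivAt_eq_zero (Filter.Eventually.of_forall hx)
      (funext hh ▸ hasDerivAt_quartic a b c x)
  have hval : α ^ 4 + a * α ^ 2 + b * α = β ^ 4 + a * β ^ 2 + b * β := by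
    linarith [hα β, hβ α, hh α, hh β]
  obtain ⟨rfl, hβα, rfl⟩ :=
    quartic_coeffs_of_critical_points_of_eq_value hαβ (hcrit hα) (hcrit hβ) hval
  exact ⟨rfl, hβα, rfl, fun x => by rw [hh]; ring⟩
end

section
/- For the swallow-tail-type surface M₂ = {(u₁,u₂,u₃) : |u₁| = (√2/(3√3))(√(u₂²+12u₃)+2u₂)√(√(u₂²+12u₃)−u₂), where the radicand conditions hold}, every point of M₂ satisfies: the quartic x⁴ + u₂x² + u₁x + u₃ has global minimum value 0. -/
/-!
Write `s = √(u₂² + 12u₃)`, `a² = (s - u₂)/6` and `d = (s + 2u₂)/3 ≥ 0`. Then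
`u₂ = d - 2a²`, `u₃ = a²(a² + d)` and, for the right sign of `a`, `u₁ = 2ad`, so the quartic is
`(x + a)²((x - a)² + d)`: it is nonnegative and vanishes at `x = -a`.
-/

open Real

lemma quartic_eq_sq_mul (a d x : ℝ) :
    x ^ 4 + (d - 2 * a ^ 2) * x ^ 2 + 2 * a * d * x + a ^ 2 * (a ^ 2 + d)
      = (x + a) ^ 2 * ((x - a) ^ 2 + d) := by
  ring

lemma iInf_quartic_eq_zero (a : ℝ) {d : ℝ} (hd : 0 ≤ d) :
    ⨅ x : ℝ, (x ^ 4 + (d - 2 * a ^ 2) * x ^ 2 + 2 * a * d * x + a ^ 2 * (a ^ 2 + d)) = 0 := by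
  simp_rw [quartic_eq_sq_mul]
  have hnonneg (x : ℝ) : 0 ≤ (x + a) ^ 2 * ((x - a) ^ 2 + d) := by positivity
  refine le_antisymm ?_ (le_ciInf hnonneg)
  calc ⨅ x : ℝ, (x + a) ^ 2 * ((x - a) ^ 2 + d)
      ≤ (-a + a) ^ 2 * ((-a - a) ^ 2 + d) :=
        ciInf_le ⟨0, by rintro _ ⟨x, rfl⟩; exact hnonneg x⟩ (-a)
    _ = 0 := by ring

lemma sqrt_two_div_mul_sqrt (t : ℝ) : √2 / (3 * √3) * √t = 2 / 3 * √(t / 6) := by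
  have h6 : √t = √6 * √(t / 6) := by
    rw [← sqrt_mul (by norm_num : (0 : ℝ) ≤ 6), mul_div_cancel₀ t (by norm_num)]
  have h12 : √2 * √6 = 2 * √3 := by
    rw [← sqrt_mul (by norm_num : (0 : ℝ) ≤ 2), show (2 : ℝ) * 6 = 2 ^ 2 * 3 by norm_num,
      sqrt_mul (by norm_num), sqrt_sq (by norm_num)]
  have h3 : √3 ≠ 0 := by positivity
  rw [h6]
  field_simp
  linear_combination √(t / 6) * h12

lemma exists_sq_eq_and_eq_mul_of_abs_eq_mul_sqrt {y k t : ℝ} (ht : 0 ≤ t)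
    (h : |y| = k * √t) : ∃ a, a ^ 2 = t ∧ y = k * a := by
  rcases abs_cases y with ⟨hy, -⟩ | ⟨hy, -⟩
  · exact ⟨√t, sq_sqrt ht, hy ▸ h⟩
  · exact ⟨-√t, by rw [neg_sq, sq_sqrt ht], by linarith⟩

lemma exists_swallowtail_param (u₁ u₂ u₃ : ℝ)
    (hrad : 0 ≤ u₂ ^ 2 + 12 * u₃)
    (h1 : √(u₂ ^ 2 + 12 * u₃) > -2 * u₂)
    (h2 : √(u₂ ^ 2 + 12 * u₃) ≥ u₂)
    (hu₁ : |u₁| = √2 / (3 * √3) * (√(u₂ ^ 2 + 12 * u₃) + 2 * u₂) *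
        √(√(u₂ ^ 2 + 12 * u₃) - u₂)) :
    ∃ a d : ℝ, 0 ≤ d ∧ u₁ = 2 * a * d ∧ u₂ = d - 2 * a ^ 2 ∧ u₃ = a ^ 2 * (a ^ 2 + d) := by
  set s := √(u₂ ^ 2 + 12 * u₃)
  have hs : s ^ 2 = u₂ ^ 2 + 12 * u₃ := sq_sqrt hrad
  have hu₁' : |u₁| = 2 * ((s + 2 * u₂) / 3) * √((s - u₂) / 6) := by
    rw [hu₁, mul_right_comm, sqrt_two_div_mul_sqrt]
    ring
  obtain ⟨a, ha, rfl⟩ :=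
    exists_sq_eq_and_eq_mul_of_abs_eq_mul_sqrt (by linarith) hu₁'
  refine ⟨a, (s + 2 * u₂) / 3, by linarith, by ring, ?_, ?_⟩
  · rw [ha]; ring
  · rw [ha]; linear_combination -hs / 12

/-- On the swallow-tail type surface `M₂`, i.e. when
`|u₁| = (√2/(3√3))(√(u₂²+12u₃)+2u₂)√(√(u₂²+12u₃)−u₂)` with the radicand
conditions, the quartic `x⁴ + u₂x² + u₁x + u₃` has global minimum value `0`. -/
theorem stmt_16 (u₁ u₂ u₃ : ℝ)
    (hrad : 0 ≤ u₂ ^ 2 + 12 * u₃)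
    (h1 : Real.sqrt (u₂ ^ 2 + 12 * u₃) > -2 * u₂)
    (h2 : Real.sqrt (u₂ ^ 2 + 12 * u₃) ≥ u₂)
    (hu₁ : |u₁| = Real.sqrt 2 / (3 * Real.sqrt 3) *
        (Real.sqrt (u₂ ^ 2 + 12 * u₃) + 2 * u₂) *
        Real.sqrt (Real.sqrt (u₂ ^ 2 + 12 * u₃) - u₂)) :
    (⨅ x : ℝ, (x ^ 4 + u₂ * x ^ 2 + u₁ * x + u₃)) = 0 := by
  obtain ⟨a, d, hd, rfl, rfl, rfl⟩ := exists_swallowtail_param u₁ u₂ u₃ hrad h1 h2 hu₁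
  exact iInf_quartic_eq_zero a hd
end
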